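/- Let ψ ∈ ℂ^{2^n} ⊗ ℂ^{2^m} be a normalized state on n + m qubits with ρ = |ψ⟩⟨ψ|, and let χ be the Schmidt rank of ψ across this bipartition, i.e. the rank of the 2^n × 2^m matrix M with entries M_{a,b} = ψ_{(a,b)}. Let P be a Pauli string on the first n qubits, and suppose there exists a Pauli string Q on the last m qubits such that (P ⊗ Q) ψ = ψ or (P ⊗ Q) ψ = −ψ. Then the marginal probability π(P) = Σ_{Q' ∈ 𝒫_m} (1/2^{n+m}) Tr[ρ (P ⊗ Q')]² satisfies the lower bound π(P) ≥ 1/(2^n χ). -/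

import Mathlib

open Matrix
open scoped ComplexOrder

/-- The four Pauli matrices. -/
noncomputable def pauli : Fin 4 → Matrix (Fin 2) (Fin 2) ℂ
  | 0 => 1
  | 1 => !![0, 1; 1, 0]
  | 2 => !![0, -Complex.I; Complex.I, 0]
  | 3 => !![1, 0; 0, -1]

/-- The Pauli string `σ^{α 0} ⊗ ⋯ ⊗ σ^{α (N-1)}` as a `2^N × 2^N` matrix,
indexed by computational-basis labels `Fin N → Fin 2`. -/
noncomputable def pauliString {N : ℕ} (α : Fin N → Fin 4) :
    Matrix (Fin N → Fin 2) (Fin N → Fin 2) ℂ :=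
  fun s s' => ∏ j, pauli (α j) (s j) (s' j)

/-- The stabilizer group of `ψ`: the Pauli strings of which `ψ` is a `±1` eigenvector. -/
def stabGroup {N : ℕ} (ψ : (Fin N → Fin 2) → ℂ) :
    Set (Matrix (Fin N → Fin 2) (Fin N → Fin 2) ℂ) :=
  {σ | (∃ α : Fin N → Fin 4, σ = pauliString α) ∧ (σ *ᵥ ψ = ψ ∨ σ *ᵥ ψ = -ψ)}

/-- A unitary `U` is Clifford if it maps every Pauli string to a Pauli string up to a
phase `c ∈ {1, -1, i, -i}` under conjugation. -/
def IsClifford {N : ℕ} (U : Matrix (Fin N → Fin 2) (Fin N → Fin 2) ℂ) : Prop :=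
  U ∈ Matrix.unitaryGroup (Fin N → Fin 2) ℂ ∧
  ∀ α : Fin N → Fin 4, ∃ (β : Fin N → Fin 4) (c : ℂ),
    (c = 1 ∨ c = -1 ∨ c = Complex.I ∨ c = -Complex.I) ∧
    U * pauliString α * Uᴴ = c • pauliString β

/-- The T gate acting on qubit `i`: `I^{⊗(i-1)} ⊗ diag(1, e^{iπ/4}) ⊗ I^{⊗(N-i)}`. -/
noncomputable def Tgate {N : ℕ} (i : Fin N) :
    Matrix (Fin N → Fin 2) (Fin N → Fin 2) ℂ :=
  Matrix.diagonal fun s => if s i = 1 then Complex.exp (Complex.I * Real.pi / 4) else 1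

/-- The state `|0⟩^{⊗N}`. -/
def zeroState (N : ℕ) : (Fin N → Fin 2) → ℂ :=
  fun s => if s = fun _ => 0 then 1 else 0

lemma pauli_conj (k : Fin 4) (x y : Fin 2) : (starRingEnd ℂ) (pauli k x y) = pauli k y x := by
  fin_cases k <;> fin_cases x <;> fin_cases y <;>
    simp [pauli, Matrix.one_apply]

lemma pauli_complete (x y x' y' : Fin 2) :
    ∑ k : Fin 4, pauli k x y * pauli k x' y' = if x = y' ∧ y = x' then 2 else 0 := by
  fin_cases x <;> fin_cases y <;> fin_cases x' <;> fin_cases y' <;>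
    simp [Fin.sum_univ_four, pauli, Matrix.one_apply] <;> ring_nf <;>
    simp [Complex.I_sq]

lemma pauli_sq_entry (k : Fin 4) (x y : Fin 2) :
    ∑ z : Fin 2, pauli k x z * pauli k z y = if x = y then 1 else 0 := by
  fin_cases k <;> fin_cases x <;> fin_cases y <;>
    simp [Fin.sum_univ_two, pauli, Matrix.one_apply] <;> ring_nf <;>
    simp [Complex.I_sq]

lemma pauliString_hermitian {N : ℕ} (α : Fin N → Fin 4) : (pauliString α).IsHermitian := by
  ext s s'
  simp only [conjTranspose_apply, pauliString, star_prod, Complex.star_def, pauli_conj]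

lemma pauliString_mul_self {N : ℕ} (α : Fin N → Fin 4) :
    pauliString α * pauliString α = 1 := by
  ext s s'
  simp only [mul_apply, pauliString, one_apply, ← Finset.prod_mul_distrib]
  calc ∑ t : Fin N → Fin 2, ∏ j, pauli (α j) (s j) (t j) * pauli (α j) (t j) (s' j)
      = ∏ j, ∑ z : Fin 2, pauli (α j) (s j) z * pauli (α j) z (s' j) := by
        rw [Finset.prod_univ_sum]
        rw [Fintype.piFinset_univ]
    _ = ∏ j, if s j = s' j then (1:ℂ) else 0 := by
        simp only [pauli_sq_entry]
    _ = if s = s' then 1 else 0 := by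
        by_cases h : s = s'
        · simp [h]
        · obtain ⟨j, hj⟩ := Function.ne_iff.mp h
          rw [if_neg h]
          exact Finset.prod_eq_zero (Finset.mem_univ j) (if_neg hj)

lemma pauliString_complete {m : ℕ} (b c b' c' : Fin m → Fin 2) :
    ∑ β : Fin m → Fin 4, pauliString β b c * pauliString β b' c' =
      if b = c' ∧ c = b' then (2:ℂ)^m else 0 := by
  calc ∑ β : Fin m → Fin 4, pauliString β b c * pauliString β b' c'
      = ∑ β : Fin m → Fin 4, ∏ j, pauli (β j) (b j) (c j) * pauli (β j) (b' j) (c' j) := by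
        simp [pauliString, Finset.prod_mul_distrib]
    _ = ∏ j, ∑ k : Fin 4, pauli k (b j) (c j) * pauli k (b' j) (c' j) := by
        rw [Finset.prod_univ_sum, Fintype.piFinset_univ]
    _ = ∏ j, if b j = c' j ∧ c j = b' j then (2:ℂ) else 0 := by
        simp only [pauli_complete]
    _ = if b = c' ∧ c = b' then (2:ℂ)^m else 0 := by
        by_cases h : b = c' ∧ c = b'
        · simp [h.1, h.2, Finset.prod_const, Finset.card_univ]
        · rw [if_neg h]
          rw [not_and_or] at h
          rcases h with h | h
          · obtain ⟨j, hj⟩ := Function.ne_iff.mp h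
            exact Finset.prod_eq_zero (Finset.mem_univ j) (by simp [hj])
          · obtain ⟨j, hj⟩ := Function.ne_iff.mp h
            exact Finset.prod_eq_zero (Finset.mem_univ j) (by simp [hj])

lemma key_sum {m : ℕ} (A : Matrix (Fin m → Fin 2) (Fin m → Fin 2) ℂ) :
    ∑ β : Fin m → Fin 4, (Matrix.trace (A * pauliString β)) ^ 2
      = 2 ^ m * Matrix.trace (A * A) := by
  have htr : ∀ B : Matrix (Fin m → Fin 2) (Fin m → Fin 2) ℂ,
      Matrix.trace (A * B) = ∑ p : (Fin m → Fin 2) × (Fin m → Fin 2), A p.1 p.2 * B p.2 p.1 := by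
    intro B
    rw [Fintype.sum_prod_type]
    simp [Matrix.trace, Matrix.diag, Matrix.mul_apply]
  simp only [htr]
  calc ∑ β : Fin m → Fin 4, (∑ p : (Fin m → Fin 2) × (Fin m → Fin 2),
          A p.1 p.2 * pauliString β p.2 p.1) ^ 2
      = ∑ β : Fin m → Fin 4, ∑ p : (Fin m → Fin 2) × (Fin m → Fin 2),
          ∑ q : (Fin m → Fin 2) × (Fin m → Fin 2),
          A p.1 p.2 * A q.1 q.2 * (pauliString β p.2 p.1 * pauliString β q.2 q.1) := by
        apply Finset.sum_congr rfl; intro β _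
        rw [sq, Finset.sum_mul_sum]
        apply Finset.sum_congr rfl; intro p _
        apply Finset.sum_congr rfl; intro q _
        ring
    _ = ∑ p : (Fin m → Fin 2) × (Fin m → Fin 2),
          ∑ q : (Fin m → Fin 2) × (Fin m → Fin 2),
          A p.1 p.2 * A q.1 q.2 *
            ∑ β : Fin m → Fin 4, pauliString β p.2 p.1 * pauliString β q.2 q.1 := by
        rw [Finset.sum_comm]
        apply Finset.sum_congr rfl; intro p _
        rw [Finset.sum_comm]
        apply Finset.sum_congr rfl; intro q _
        rw [Finset.mul_sum]
    _ = ∑ p : (Fin m → Fin 2) × (Fin m → Fin 2),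
          ∑ q : (Fin m → Fin 2) × (Fin m → Fin 2),
          A p.1 p.2 * A q.1 q.2 * (if q = (p.2, p.1) then (2:ℂ)^m else 0) := by
        apply Finset.sum_congr rfl; intro p _
        apply Finset.sum_congr rfl; intro q _
        rw [pauliString_complete]
        have hiff : (p.2 = q.1 ∧ p.1 = q.2) ↔ q = (p.2, p.1) := by
          constructor
          · rintro ⟨h1, h2⟩; exact Prod.ext h1.symm h2.symm
          · rintro rfl; exact ⟨rfl, rfl⟩
        rw [if_congr hiff rfl rfl]
    _ = ∑ p : (Fin m → Fin 2) × (Fin m → Fin 2),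
          A p.1 p.2 * A p.2 p.1 * (2:ℂ)^m := by
        apply Finset.sum_congr rfl; intro p _
        rw [Finset.sum_eq_single ((p.2, p.1) : (Fin m → Fin 2) × (Fin m → Fin 2))]
        · simp
        · intro q _ hq; simp [hq]
        · intro h; exact absurd (Finset.mem_univ _) h
    _ = 2 ^ m * ∑ p : (Fin m → Fin 2) × (Fin m → Fin 2), A p.1 p.2 * A p.2 p.1 := by
        rw [Finset.mul_sum]
        apply Finset.sum_congr rfl; intro p _
        ring

open Kronecker

lemma trace_rho {n m : ℕ} (ψ : ((Fin n → Fin 2) × (Fin m → Fin 2)) → ℂ)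
    (P : Matrix (Fin n → Fin 2) (Fin n → Fin 2) ℂ)
    (Q : Matrix (Fin m → Fin 2) (Fin m → Fin 2) ℂ) :
    Matrix.trace (Matrix.vecMulVec ψ (star ψ) * (P ⊗ₖ Q)) =
    Matrix.trace ((Matrix.of fun b b' => ∑ p : (Fin n → Fin 2) × (Fin n → Fin 2),
        ψ (p.1, b) * (starRingEnd ℂ) (ψ (p.2, b')) * P p.2 p.1) * Q) := by
  have l1 : Matrix.trace (Matrix.vecMulVec ψ (star ψ) * (P ⊗ₖ Q)) =
      ∑ u : ((Fin n → Fin 2) × (Fin m → Fin 2)) × ((Fin n → Fin 2) × (Fin m → Fin 2)),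
        ψ u.1 * (starRingEnd ℂ) (ψ u.2) * (P u.2.1 u.1.1 * Q u.2.2 u.1.2) := by
    rw [Fintype.sum_prod_type]
    simp [Matrix.trace, Matrix.diag, Matrix.mul_apply, Matrix.vecMulVec_apply,
      Matrix.kroneckerMap_apply, Complex.star_def]
  have l2 : Matrix.trace ((Matrix.of fun b b' => ∑ p : (Fin n → Fin 2) × (Fin n → Fin 2),
        ψ (p.1, b) * (starRingEnd ℂ) (ψ (p.2, b')) * P p.2 p.1) * Q) =
      ∑ v : ((Fin m → Fin 2) × (Fin m → Fin 2)) × ((Fin n → Fin 2) × (Fin n → Fin 2)),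
        ψ (v.2.1, v.1.1) * (starRingEnd ℂ) (ψ (v.2.2, v.1.2)) * P v.2.2 v.2.1 * Q v.1.2 v.1.1 := by
    simp only [Matrix.trace, Matrix.diag_apply, Matrix.mul_apply, Matrix.of_apply,
      Finset.sum_mul]
    conv_rhs => rw [Fintype.sum_prod_type]
    conv_rhs => rw [Fintype.sum_prod_type]
  rw [l1, l2]
  apply Fintype.sum_equiv
    ⟨fun u => ((u.1.2, u.2.2), (u.1.1, u.2.1)), fun v => ((v.2.1, v.1.1), (v.2.2, v.1.2)),
      fun u => rfl, fun v => rfl⟩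
  intro u
  simp only [Equiv.coe_fn_mk]
  ring

lemma trace_rho_eig {d : Type*} [Fintype d] [DecidableEq d] (ψ : d → ℂ) (S : Matrix d d ℂ) :
    Matrix.trace (Matrix.vecMulVec ψ (star ψ) * S) =
      ∑ t, (starRingEnd ℂ) (ψ t) * (S *ᵥ ψ) t := by
  simp only [Matrix.trace, Matrix.diag_apply, Matrix.mul_apply, Matrix.vecMulVec_apply,
    Pi.star_apply, Matrix.mulVec, dotProduct, Finset.mul_sum]
  rw [Finset.sum_comm]
  apply Finset.sum_congr rfl; intro t _
  apply Finset.sum_congr rfl; intro s _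
  simp only [RCLike.star_def]
  ring

open Kronecker

set_option maxHeartbeats 1000000 in
/-- Lemma 2 of the paper: Let `ψ` be a normalized state on `n + m` qubits,
`χ` its Schmidt rank across the cut (the rank of the reshaping matrix `M_{a,b} = ψ (a,b)`),
and `P` a Pauli string on the first `n` qubits. If there is a Pauli string `Q` on the
last `m` qubits with `(P ⊗ Q) ψ = ±ψ`, then the marginal probability
`π(P) = ∑_{Q' ∈ 𝒫_m} Tr[ρ (P ⊗ Q')]² / 2^{n+m}` satisfies `π(P) ≥ 1 / (2^n χ)`. -/
theorem marginal_prob_lower_bound {n m : ℕ}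
    (ψ : ((Fin n → Fin 2) × (Fin m → Fin 2)) → ℂ)
    (hψ : ∑ s, ‖ψ s‖ ^ 2 = 1)
    (M : Matrix (Fin n → Fin 2) (Fin m → Fin 2) ℂ)
    (hM : M = fun a b => ψ (a, b))
    (α : Fin n → Fin 4)
    (hstab : ∃ β : Fin m → Fin 4,
      (pauliString α ⊗ₖ pauliString β) *ᵥ ψ = ψ ∨
      (pauliString α ⊗ₖ pauliString β) *ᵥ ψ = -ψ) :
    (1 : ℂ) / (2 ^ n * M.rank) ≤
      ∑ β : Fin m → Fin 4,
        Matrix.trace (Matrix.vecMulVec ψ (star ψ) * (pauliString α ⊗ₖ pauliString β)) ^ 2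
          / 2 ^ (n + m) := by
  classical
  obtain ⟨β₀, hst⟩ := hstab
  set P : Matrix (Fin n → Fin 2) (Fin n → Fin 2) ℂ := pauliString α with hPdef
  set A : Matrix (Fin m → Fin 2) (Fin m → Fin 2) ℂ :=
    Matrix.of fun b b' => ∑ p : (Fin n → Fin 2) × (Fin n → Fin 2),
      ψ (p.1, b) * (starRingEnd ℂ) (ψ (p.2, b')) * P p.2 p.1 with hAdef
  have h1 : ∀ Q, Matrix.trace (Matrix.vecMulVec ψ (star ψ) * (P ⊗ₖ Q)) =
      Matrix.trace (A * Q) := fun Q => trace_rho ψ P Q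
  have hsum : ∑ β : Fin m → Fin 4,
      Matrix.trace (Matrix.vecMulVec ψ (star ψ) * (P ⊗ₖ pauliString β)) ^ 2
      = 2 ^ m * Matrix.trace (A * A) := by
    simp_rw [h1]; exact key_sum A
  -- the stabilizer gives trace ±1
  have hterm : ∀ t, (starRingEnd ℂ) (ψ t) * ψ t = ((‖ψ t‖ ^ 2 : ℝ) : ℂ) := by
    intro t
    rw [mul_comm, Complex.mul_conj]
    norm_num [Complex.normSq_eq_norm_sq]
  have htr1 : Matrix.trace (A * pauliString β₀) = 1 ∨
      Matrix.trace (A * pauliString β₀) = -1 := by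
    rcases hst with h | h
    · left
      rw [← h1, trace_rho_eig, h]
      simp_rw [hterm]
      exact_mod_cast hψ
    · right
      rw [← h1, trace_rho_eig, h]
      simp only [Pi.neg_apply, mul_neg]
      rw [Finset.sum_neg_distrib]
      simp_rw [hterm]
      rw [neg_eq_iff_eq_neg, neg_neg]
      exact_mod_cast hψ
  -- A is Hermitian
  have hPer : ∀ x y, (starRingEnd ℂ) (P x y) = P y x := by
    intro x y
    have := pauliString_hermitian α
    rw [Matrix.IsHermitian] at this
    conv_rhs => rw [hPdef, ← this]
    rfl
  have hherm : A.IsHermitian := by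
    rw [Matrix.IsHermitian]
    ext b b'
    rw [Matrix.conjTranspose_apply]
    show star (A b' b) = A b b'
    rw [hAdef]
    simp only [Matrix.of_apply, star_sum, star_mul', RCLike.star_def, Complex.conj_conj, hPer]
    apply Fintype.sum_equiv (Equiv.prodComm _ _)
    intro p
    simp only [Equiv.prodComm_apply, Prod.snd_swap, Prod.fst_swap]
    ring
  -- rank bound
  have hAprod : A = Mᵀ * Pᵀ * M.map (starRingEnd ℂ) := by
    ext b b'
    rw [hAdef]
    simp only [Matrix.of_apply, Matrix.mul_apply, Matrix.transpose_apply, Matrix.map_apply,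
      Finset.sum_mul, hM]
    rw [Fintype.sum_prod_type]
    rw [Finset.sum_comm]
    apply Finset.sum_congr rfl; intro a' _
    apply Finset.sum_congr rfl; intro a _
    change ψ (a, b) * (starRingEnd ℂ) (ψ (a', b')) * P a' a = ψ (a, b) * P a' a * (starRingEnd ℂ) (ψ (a', b'))
    ring
  have hmapeq : M.map (starRingEnd ℂ) = (Mᴴ)ᵀ := by
    ext a b
    simp [Matrix.conjTranspose_apply, Matrix.map_apply, RCLike.star_def]
  have hrank : A.rank ≤ M.rank := by
    rw [hAprod]
    calc (Mᵀ * Pᵀ * M.map (starRingEnd ℂ)).rank ≤ (M.map (starRingEnd ℂ)).rank :=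
          Matrix.rank_mul_le_right _ _
      _ = M.rank := by rw [hmapeq, Matrix.rank_transpose, Matrix.rank_conjTranspose]
  -- spectral decomposition
  have hspec := hherm.spectral_theorem
  simp only [Unitary.conjStarAlgAut_apply, Unitary.coe_star] at hspec
  have hu1 : star (hherm.eigenvectorUnitary : Matrix (Fin m → Fin 2) (Fin m → Fin 2) ℂ) *
      (hherm.eigenvectorUnitary : Matrix (Fin m → Fin 2) (Fin m → Fin 2) ℂ) = 1 :=
    Matrix.mem_unitaryGroup_iff'.mp (hherm.eigenvectorUnitary).2
  have hu2 : (hherm.eigenvectorUnitary : Matrix (Fin m → Fin 2) (Fin m → Fin 2) ℂ) *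
      star (hherm.eigenvectorUnitary : Matrix (Fin m → Fin 2) (Fin m → Fin 2) ℂ) = 1 :=
    Matrix.mem_unitaryGroup_iff.mp (hherm.eigenvectorUnitary).2
  set lam : (Fin m → Fin 2) → ℝ := hherm.eigenvalues with hlam
  set V : Matrix (Fin m → Fin 2) (Fin m → Fin 2) ℂ :=
    (hherm.eigenvectorUnitary : Matrix (Fin m → Fin 2) (Fin m → Fin 2) ℂ) with hV
  have htraceDiag : ∀ C : Matrix (Fin m → Fin 2) (Fin m → Fin 2) ℂ,
      Matrix.trace (Matrix.diagonal (RCLike.ofReal ∘ lam) * C) = ∑ i, (lam i : ℂ) * C i i := by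
    intro C
    simp [Matrix.trace, Matrix.diag, Matrix.mul_apply, Matrix.diagonal_apply,
      Finset.sum_ite_eq, Function.comp]
  have hAB : ∀ B, Matrix.trace (A * B) = ∑ i, (lam i : ℂ) * (star V * B * V) i i := by
    intro B
    have : A * B = V * (Matrix.diagonal (RCLike.ofReal ∘ lam) * (star V * B * V)) * star V := by
      rw [hspec]
      simp only [Matrix.mul_assoc, hu1, hu2, Matrix.mul_one]
    rw [this, Matrix.trace_mul_cycle, ← Matrix.mul_assoc, hu1, Matrix.one_mul]
    exact htraceDiag _
  have hD : star V * A * V = Matrix.diagonal (RCLike.ofReal ∘ lam) := by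
    conv_lhs => rw [hspec]
    simp only [Matrix.mul_assoc]
    rw [hu1, Matrix.mul_one, ← Matrix.mul_assoc, hu1, Matrix.one_mul]
  have htrAA : Matrix.trace (A * A) = ((∑ i, lam i ^ 2 : ℝ) : ℂ) := by
    rw [hAB A, hD]
    push_cast
    apply Finset.sum_congr rfl
    intro i _
    rw [Matrix.diagonal_apply_eq]
    simp [Function.comp]
    ring
  -- the unitary-conjugated Pauli string
  set R : Matrix (Fin m → Fin 2) (Fin m → Fin 2) ℂ := star V * pauliString β₀ * V with hRdef
  have htrQ : Matrix.trace (A * pauliString β₀) = ∑ i, (lam i : ℂ) * R i i := hAB _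
  have hQh : star (pauliString β₀) = pauliString β₀ := by
    rw [Matrix.star_eq_conjTranspose]; exact pauliString_hermitian β₀
  have hRR : R * star R = 1 := by
    rw [hRdef]
    have hs : star (star V * pauliString β₀ * V) = star V * (pauliString β₀ * V) := by
      rw [StarMul.star_mul, StarMul.star_mul, star_star, hQh]
    rw [hs]
    calc star V * pauliString β₀ * V * (star V * (pauliString β₀ * V))
        = star V * (pauliString β₀ * ((V * star V) * (pauliString β₀ * V))) := by
          simp only [Matrix.mul_assoc]
      _ = star V * ((pauliString β₀ * pauliString β₀) * V) := by
          rw [hu2, Matrix.one_mul, Matrix.mul_assoc]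
      _ = 1 := by rw [pauliString_mul_self, Matrix.one_mul, hu1]
  have hRle : ∀ i, ‖R i i‖ ≤ 1 := by
    intro i
    have hone : (R * star R) i i = 1 := by rw [hRR]; simp [Matrix.one_apply]
    rw [Matrix.mul_apply] at hone
    simp only [Matrix.star_apply, RCLike.star_def, Complex.mul_conj] at hone
    have hsumsq : ∑ j, Complex.normSq (R i j) = 1 := by exact_mod_cast hone
    have hle : ‖R i i‖ ^ 2 ≤ 1 := by
      rw [← Complex.normSq_eq_norm_sq]
      rw [← hsumsq]
      exact Finset.single_le_sum (fun j _ => Complex.normSq_nonneg _) (Finset.mem_univ i)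
    nlinarith [norm_nonneg (R i i)]
  -- the main real inequality
  set supp : Finset (Fin m → Fin 2) := Finset.univ.filter (fun i => lam i ≠ 0) with hsupp
  have hcard : (supp.card : ℝ) ≤ (M.rank : ℝ) := by
    have h2 : A.rank = supp.card := by
      rw [hherm.rank_eq_card_non_zero_eigs, Fintype.card_subtype]
    exact_mod_cast h2 ▸ hrank
  have habs1 : ‖Matrix.trace (A * pauliString β₀)‖ = 1 := by
    rcases htr1 with h | h <;> simp [h]
  have hle1 : (1:ℝ) ≤ ∑ i ∈ supp, |lam i| := by
    rw [← habs1, htrQ]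
    calc ‖∑ i, (lam i : ℂ) * R i i‖ ≤ ∑ i, ‖(lam i : ℂ) * R i i‖ := norm_sum_le _ _
      _ = ∑ i, |lam i| * ‖R i i‖ := by
          apply Finset.sum_congr rfl; intro i _
          rw [norm_mul, Complex.norm_real, Real.norm_eq_abs]
      _ = ∑ i ∈ supp, |lam i| * ‖R i i‖ := by
          refine (Finset.sum_subset (Finset.filter_subset _ _) ?_).symm
          intro i _ hi
          have : lam i = 0 := by
            by_contra hne
            exact hi (Finset.mem_filter.mpr ⟨Finset.mem_univ i, hne⟩)
          simp [this]
      _ ≤ ∑ i ∈ supp, |lam i| :=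
          Finset.sum_le_sum fun i _ => mul_le_of_le_one_right (abs_nonneg _) (hRle i)
  have hCS : (∑ i ∈ supp, |lam i|) ^ 2 ≤ supp.card * ∑ i ∈ supp, |lam i| ^ 2 :=
    sq_sum_le_card_mul_sum_sq
  have hSle : ∑ i ∈ supp, |lam i| ^ 2 ≤ ∑ i, lam i ^ 2 := by
    simp_rw [sq_abs]
    exact Finset.sum_le_sum_of_subset_of_nonneg (Finset.filter_subset _ _)
      (fun i _ _ => sq_nonneg _)
  have hSnn : (0:ℝ) ≤ ∑ i, lam i ^ 2 := Finset.sum_nonneg fun _ _ => sq_nonneg _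
  have hone : (1:ℝ) ≤ (M.rank : ℝ) * ∑ i, lam i ^ 2 := by
    have hsuppnn : (0:ℝ) ≤ ∑ i ∈ supp, |lam i| :=
      Finset.sum_nonneg fun i _ => abs_nonneg _
    have hcardnn : (0:ℝ) ≤ (supp.card : ℝ) := Nat.cast_nonneg _
    nlinarith
  have hrpos : (0:ℝ) < (M.rank : ℝ) := by nlinarith
  -- wrap up
  rw [← Finset.sum_div, hsum, htrAA]
  have hLeq : (1 : ℂ) / (2 ^ n * M.rank) = (((1 / (2 ^ n * M.rank) : ℝ)) : ℂ) := by
    push_cast; ring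
  have hReq : ((2:ℂ) ^ m * ((∑ i, lam i ^ 2 : ℝ) : ℂ)) / 2 ^ (n + m) =
      (((2 ^ m * (∑ i, lam i ^ 2) / 2 ^ (n + m) : ℝ)) : ℂ) := by
    push_cast; ring
  rw [hLeq, hReq, Complex.real_le_real]
  rw [div_le_div_iff₀ (mul_pos (by positivity) hrpos) (by positivity)]
  have hkey : (2:ℝ) ^ (n + m) ≤ 2 ^ m * (∑ i, lam i ^ 2) * (2 ^ n * M.rank) := by
    rw [pow_add]
    nlinarith [pow_pos (by norm_num : (0:ℝ) < 2) n, pow_pos (by norm_num : (0:ℝ) < 2) m,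
      mul_le_mul_of_nonneg_left hone (by positivity : (0:ℝ) ≤ (2:ℝ)^n * 2^m)]
  linarith
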